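/- arXiv:1402.3078 — 3 statements merged into one kernel-verified Lean document; each statement's English description precedes it below -/
import Mathlib

section
/- Let G be a connected graph on n ≥ 3 vertices with m edges and maximum degree Δ satisfying 2 ≤ Δ ≤ n−1. Then AZI(G) ≥ (Δ/(Δ−1))³·(2n − m − 2m/Δ) + 8·(2m − 2n + 2m/Δ). -/
open Finset

set_option maxHeartbeats 1000000 in
lemma key_le (D x y : ℕ) (hD : 2 ≤ D) (hx : 1 ≤ x) (hxy : x ≤ y) (hyD : y ≤ D)
    (hne : ¬(x = 1 ∧ y = 1)) :
    ((x * y : ℝ) / ((x:ℝ) + y - 2)) ^ 3 ≥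
      8 - (8 - ((D : ℝ) / ((D : ℝ) - 1)) ^ 3) * (2 / x + 2 / y - 1 - 2 / D) := by
  have hxD : x ≤ D := hxy.trans hyD
  have hD1 : (1:ℝ) ≤ (D:ℝ) - 1 := by
    have : (2:ℝ) ≤ D := by exact_mod_cast hD
    linarith
  have hD0 : (0:ℝ) < D := by positivity
  have hDq : (0:ℝ) ≤ (D:ℝ) / ((D:ℝ) - 1) := by positivity
  have hA8 : ((D : ℝ) / ((D : ℝ) - 1)) ^ 3 ≤ 8 := by
    have h2 : (D:ℝ) / ((D:ℝ) - 1) ≤ 2 := by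
      rw [div_le_iff₀ (by linarith)]; linarith
    calc ((D : ℝ) / ((D : ℝ) - 1)) ^ 3 ≤ 2 ^ 3 := pow_le_pow_left₀ hDq h2 3
    _ = 8 := by norm_num
  have hA1 : (1:ℝ) ≤ ((D : ℝ) / ((D : ℝ) - 1)) ^ 3 := by
    have h1 : (1:ℝ) ≤ (D:ℝ) / ((D:ℝ) - 1) := by
      rw [le_div_iff₀ (by linarith)]; linarith
    calc (1:ℝ) = 1 ^ 3 := by norm_num
    _ ≤ ((D : ℝ) / ((D : ℝ) - 1)) ^ 3 := pow_le_pow_left₀ (by norm_num) h1 3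
  have hy2 : 2 ≤ y := by
    rcases Nat.lt_or_ge y 2 with h | h
    · interval_cases y
      · omega
      · exact absurd ⟨le_antisymm (hxy.trans (le_refl 1)) hx, rfl⟩ hne
    · exact h
  have hY2 : (2:ℝ) ≤ y := by exact_mod_cast hy2
  have hYD : (y:ℝ) ≤ D := by exact_mod_cast hyD
  have hY0 : (0:ℝ) < y := by linarith
  have hsY : 0 ≤ 2 / (y:ℝ) - 2 / D := by
    have : 2 / (D:ℝ) ≤ 2 / y := div_le_div_of_nonneg_left (by norm_num) hY0 hYD
    linarith
  rcases Nat.lt_or_ge x 3 with hx3 | hx3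
  · interval_cases x
    · -- x = 1 : pendant edge
      have hmono : (D:ℝ) / ((D:ℝ) - 1) ≤ (y:ℝ) / ((y:ℝ) - 1) := by
        rw [div_le_div_iff₀ (by linarith) (by linarith)]
        nlinarith
      have hLHS : ((D : ℝ) / ((D : ℝ) - 1)) ^ 3 ≤ ((y:ℝ) / ((y:ℝ) - 1)) ^ 3 :=
        pow_le_pow_left₀ hDq hmono 3
      have he : ((1 * y : ℝ) / ((1:ℝ) + y - 2)) = (y:ℝ) / ((y:ℝ) - 1) := by
        rw [one_mul]; ring_nf
      push_cast
      rw [he]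
      have hprod : 0 ≤ (8 - ((D : ℝ) / ((D : ℝ) - 1)) ^ 3) * (2 / (y:ℝ) - 2 / D) :=
        mul_nonneg (by linarith) hsY
      nlinarith [hprod]
    · -- x = 2
      have he : ((2 * y : ℝ) / ((2:ℝ) + y - 2)) = 2 := by
        rw [show ((2:ℝ) + y - 2) = (y:ℝ) by ring, mul_div_assoc, div_self (ne_of_gt hY0), mul_one]
      push_cast
      rw [he]
      have hprod : 0 ≤ (8 - ((D : ℝ) / ((D : ℝ) - 1)) ^ 3) * (2 / (y:ℝ) - 2 / D) :=
        mul_nonneg (by linarith) hsY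
      norm_num
      nlinarith [hprod]
  · -- 3 ≤ x ≤ y
    have hX3 : (3:ℝ) ≤ x := by exact_mod_cast hx3
    have hXY : (x:ℝ) ≤ y := by exact_mod_cast hxy
    have hX0 : (0:ℝ) < x := by linarith
    have hden : (0:ℝ) < (x:ℝ) + y - 2 := by linarith
    have hden2 : (0:ℝ) < 2*(x:ℝ) - 2 := by linarith
    have hg : (x:ℝ)^2 / (2*(x:ℝ)-2) ≤ (x*y:ℝ) / ((x:ℝ)+y-2) := by
      rw [div_le_div_iff₀ hden2 hden]
      nlinarith [mul_nonneg (mul_nonneg hX0.le (by linarith : (0:ℝ) ≤ (y:ℝ)-x)) (by linarith : (0:ℝ) ≤ (x:ℝ)-2)]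
    have hg0 : (0:ℝ) ≤ (x:ℝ)^2 / (2*(x:ℝ)-2) := by positivity
    have hcube : ((x:ℝ)^2 / (2*(x:ℝ)-2))^3 ≤ ((x*y:ℝ) / ((x:ℝ)+y-2))^3 :=
      pow_le_pow_left₀ hg0 hg 3
    have hone : 15 - 14 / (x:ℝ) ≤ ((x:ℝ)^2 / (2*(x:ℝ)-2))^3 := by
      have heq : 15 - 14 / (x:ℝ) = (15*(x:ℝ)-14)/x := by field_simp
      rw [div_pow, heq, div_le_div_iff₀ hX0 (pow_pos hden2 3)]
      nlinarith [pow_pos hX0 3, sq_nonneg ((x:ℝ)-3), sq_nonneg (x:ℝ), sq_nonneg ((x:ℝ)^2-3*x),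
        sq_nonneg ((x:ℝ)^3-3*x^2), pow_le_pow_left₀ (by norm_num : (0:ℝ) ≤ 3) hX3 3]
    have hxfrac : 0 ≤ 1 - 2 / (x:ℝ) := by
      have : 2 / (x:ℝ) ≤ 2 / 3 := div_le_div_of_nonneg_left (by norm_num) (by norm_num) hX3
      linarith
    have hneg_t : -(2 / (x:ℝ) + 2 / y - 1 - 2 / D) ≤ 1 - 2 / x := by
      have h1 : 2 / (D:ℝ) ≤ 2 / y := div_le_div_of_nonneg_left (by norm_num) hY0 hYD
      linarith
    have h2 : -((8 - ((D : ℝ) / ((D : ℝ) - 1)) ^ 3) * (2 / (x:ℝ) + 2 / y - 1 - 2 / D)) ≤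
        (8 - ((D : ℝ) / ((D : ℝ) - 1)) ^ 3) * (1 - 2/x) := by
      rw [← mul_neg]
      exact mul_le_mul_of_nonneg_left hneg_t (by linarith)
    have h3 : (8 - ((D : ℝ) / ((D : ℝ) - 1)) ^ 3) * (1 - 2/(x:ℝ)) ≤ 7 * (1 - 2/x) :=
      mul_le_mul_of_nonneg_right (by linarith) hxfrac
    have h4 : (8:ℝ) + 7 * (1 - 2/(x:ℝ)) = 15 - 14 / x := by ring
    linarith

lemma key (D x y : ℕ) (hD : 2 ≤ D) (hx : 1 ≤ x) (hy : 1 ≤ y) (hxD : x ≤ D) (hyD : y ≤ D)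
    (hne : ¬(x = 1 ∧ y = 1)) :
    ((x * y : ℝ) / ((x:ℝ) + y - 2)) ^ 3 ≥
      8 - (8 - ((D : ℝ) / ((D : ℝ) - 1)) ^ 3) * (2 / x + 2 / y - 1 - 2 / D) := by
  rcases le_total x y with h | h
  · exact key_le D x y hD hx h hyD hne
  · have H := key_le D y x hD hy h hxD (by tauto)
    rw [mul_comm (x:ℝ), add_comm (x:ℝ)]
    ring_nf at H ⊢
    linarith

lemma sum_lift_add {V : Type*} [Fintype V] (G : SimpleGraph V) [DecidableRel G.Adj]
    (f : V → ℝ) :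
    ∑ e ∈ G.edgeFinset, Sym2.lift ⟨fun u v => f u + f v, fun a b => add_comm _ _⟩ e
      = ∑ v, (G.degree v : ℝ) * f v := by
  classical
  have hA : ∑ d : G.Dart, f d.fst = ∑ v, (G.degree v : ℝ) * f v := by
    rw [← Finset.sum_fiberwise_of_maps_to (g := fun d : G.Dart => d.fst)
      (fun d _ => Finset.mem_univ d.fst) (fun d => f d.fst)]
    refine Finset.sum_congr rfl fun v _ => ?_
    have h1 : ∑ d ∈ Finset.univ.filter (fun d : G.Dart => d.fst = v), f d.fst
        = ∑ _d ∈ Finset.univ.filter (fun d : G.Dart => d.fst = v), f v :=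
      Finset.sum_congr rfl fun d hd => by rw [(Finset.mem_filter.mp hd).2]
    rw [h1, Finset.sum_const, nsmul_eq_mul]
    congr 2
    have h2 := G.dart_fst_fiber_card_eq_degree v
    convert h2 using 2
  have hB : ∑ d : G.Dart, f d.fst
      = ∑ e ∈ G.edgeFinset, Sym2.lift ⟨fun u v => f u + f v, fun a b => add_comm _ _⟩ e := by
    rw [← Finset.sum_fiberwise_of_maps_to (t := G.edgeFinset) (g := fun d : G.Dart => d.edge)
      (fun d _ => by rw [SimpleGraph.mem_edgeFinset]; exact d.edge_mem) (fun d => f d.fst)]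
    refine Finset.sum_congr rfl fun e he => ?_
    rw [SimpleGraph.mem_edgeFinset] at he
    induction e with
    | _ u v =>
      let d : G.Dart := ⟨(u, v), he⟩
      have hfiber : (Finset.univ.filter fun d' : G.Dart => d'.edge = s(u,v)) = {d, d.symm} := by
        have h3 := d.edge_fiber
        convert h3 using 2
        exact Iff.rfl
      rw [hfiber, Finset.sum_pair (d.symm_ne.symm)]
      simp only [Sym2.lift_mk]
      rfl
  rw [← hA, hB]

lemma degree_pos_of_connected {V : Type*} [Fintype V] (G : SimpleGraph V) [DecidableRel G.Adj]
    (hconn : G.Connected) (hcard : 2 ≤ Fintype.card V) (v : V) : 1 ≤ G.degree v := by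
  obtain ⟨w, hw⟩ := Fintype.exists_ne_of_one_lt_card (by omega) v
  obtain ⟨p⟩ := hconn.preconnected v w
  cases p with
  | nil => exact absurd rfl hw.symm
  | cons h _ =>
    rw [Nat.succ_le_iff, SimpleGraph.degree_pos_iff_exists_adj]
    exact ⟨_, h⟩

lemma not_both_deg_one {V : Type*} [Fintype V] (G : SimpleGraph V) [DecidableRel G.Adj]
    (hconn : G.Connected) (hcard : 3 ≤ Fintype.card V) {u v : V} (huv : G.Adj u v)
    (hu : G.degree u = 1) (hv : G.degree v = 1) : False := by
  classical
  have hnu : G.neighborFinset u = {v} := by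
    apply Finset.eq_singleton_iff_unique_mem.mpr
    refine ⟨by rwa [SimpleGraph.mem_neighborFinset], fun x hx => ?_⟩
    have := Finset.card_le_one.mp (le_of_eq hu) x hx v (by rwa [SimpleGraph.mem_neighborFinset])
    exact this
  have hnv : G.neighborFinset v = {u} := by
    apply Finset.eq_singleton_iff_unique_mem.mpr
    refine ⟨by rw [SimpleGraph.mem_neighborFinset]; exact huv.symm, fun x hx => ?_⟩
    exact Finset.card_le_one.mp (le_of_eq hv) x hx u
      (by rw [SimpleGraph.mem_neighborFinset]; exact huv.symm)
  have hstep : ∀ a b : V, G.Walk a b → (a = u ∨ a = v) → (b = u ∨ b = v) := by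
    intro a b p
    induction p with
    | nil => exact id
    | cons h p ih =>
      rename_i a' c b'
      intro ha
      apply ih
      rcases ha with rfl | rfl
      · right
        have : c ∈ G.neighborFinset a' := by rwa [SimpleGraph.mem_neighborFinset]
        rw [hnu] at this
        simpa using this
      · left
        have : c ∈ G.neighborFinset a' := by rwa [SimpleGraph.mem_neighborFinset]
        rw [hnv] at this
        simpa using this
  have hall : ∀ w : V, w = u ∨ w = v := by
    intro w
    obtain ⟨p⟩ := hconn.preconnected u w
    exact hstep u w p (Or.inl rfl)
  have hsub : (Finset.univ : Finset V) ⊆ {u, v} := by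
    intro w _
    rcases hall w with rfl | rfl <;> simp
  have := Finset.card_le_card hsub
  rw [Finset.card_univ] at this
  have h2 : ({u, v} : Finset V).card ≤ 2 := Finset.card_insert_le _ _ |>.trans (by simp)
  omega

noncomputable def AZI {V : Type*} [Fintype V] (G : SimpleGraph V) [DecidableRel G.Adj] : ℝ :=
  ∑ e ∈ G.edgeFinset,
    Sym2.lift ⟨fun u v => ((G.degree u * G.degree v : ℝ) / (G.degree u + G.degree v - 2)) ^ 3,
      fun u v => by simp only []; rw [mul_comm (G.degree u : ℝ), add_comm (G.degree u : ℝ)]⟩ e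

theorem AZI_lower_bound {V : Type*} [Fintype V]
    (G : SimpleGraph V) [DecidableRel G.Adj] (n m Δ : ℕ)
    (hcard : Fintype.card V = n) (hn : 3 ≤ n)
    (hm : G.edgeFinset.card = m)
    (hΔ : G.maxDegree = Δ) (hΔ2 : 2 ≤ Δ) (hΔn : Δ ≤ n - 1)
    (hconn : G.Connected) :
    AZI G ≥ ((Δ : ℝ) / ((Δ : ℝ) - 1)) ^ 3 * (2 * n - m - 2 * m / Δ)
      + 8 * (2 * m - 2 * n + 2 * m / Δ) := by
  obtain ⟨c, hc⟩ : ∃ c : ℝ, c = 8 - ((Δ : ℝ) / ((Δ : ℝ) - 1)) ^ 3 := ⟨_, rfl⟩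
  have hcard2 : 2 ≤ Fintype.card V := by omega
  have hdeg1 : ∀ v, 1 ≤ G.degree v := degree_pos_of_connected G hconn hcard2
  have hdegD : ∀ v, G.degree v ≤ Δ := fun v => hΔ ▸ G.degree_le_maxDegree v
  -- per-edge bound
  have hstep : ∀ e ∈ G.edgeFinset,
      8 - c * (Sym2.lift ⟨fun u v => 2/(G.degree u : ℝ) + 2/(G.degree v : ℝ),
        fun a b => add_comm _ _⟩ e - 1 - 2/(Δ:ℝ))
      ≤ Sym2.lift ⟨fun u v => ((G.degree u * G.degree v : ℝ) / (G.degree u + G.degree v - 2)) ^ 3,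
        fun u v => by simp only []; rw [mul_comm (G.degree u : ℝ), add_comm (G.degree u : ℝ)]⟩ e := by
    intro e he
    induction e with
    | _ u v =>
      rw [SimpleGraph.mem_edgeFinset, SimpleGraph.mem_edgeSet] at he
      simp only [Sym2.lift_mk]
      have hne : ¬(G.degree u = 1 ∧ G.degree v = 1) := by
        rintro ⟨h1, h2⟩
        exact not_both_deg_one G hconn (by omega) he h1 h2
      have hk := key Δ (G.degree u) (G.degree v) hΔ2 (hdeg1 u) (hdeg1 v)
        (hdegD u) (hdegD v) hne
      rw [hc]
      linarith [hk]
  -- sum of the weight function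
  have hw_sum : ∑ e ∈ G.edgeFinset,
      Sym2.lift ⟨fun u v => 2/(G.degree u : ℝ) + 2/(G.degree v : ℝ),
        fun a b => add_comm _ _⟩ e = 2 * n := by
    have h := sum_lift_add G (fun v => 2/(G.degree v : ℝ))
    rw [h]
    have h2 : ∀ v : V, (G.degree v : ℝ) * (2/(G.degree v : ℝ)) = 2 := by
      intro v
      have h0 : (G.degree v : ℝ) ≠ 0 := by
        have := hdeg1 v
        positivity
      rw [mul_comm, div_mul_cancel₀ _ h0]
    rw [Finset.sum_congr rfl (fun v _ => h2 v), Finset.sum_const, Finset.card_univ, hcard,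
      nsmul_eq_mul]
    ring
  have hsum : ∑ e ∈ G.edgeFinset,
      (8 - c * (Sym2.lift ⟨fun u v => 2/(G.degree u : ℝ) + 2/(G.degree v : ℝ),
        fun a b => add_comm _ _⟩ e - 1 - 2/(Δ:ℝ)))
      = 8*(m:ℝ) - c*(2*(n:ℝ) - m - 2*m/(Δ:ℝ)) := by
    have expand : ∀ e ∈ G.edgeFinset,
        (8 - c * (Sym2.lift ⟨fun u v => 2/(G.degree u : ℝ) + 2/(G.degree v : ℝ),
          fun a b => add_comm _ _⟩ e - 1 - 2/(Δ:ℝ)))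
        = (8 + c + c*(2/(Δ:ℝ))) - c * Sym2.lift ⟨fun u v => 2/(G.degree u : ℝ) + 2/(G.degree v : ℝ),
          fun a b => add_comm _ _⟩ e := fun e _ => by ring
    rw [Finset.sum_congr rfl expand, Finset.sum_sub_distrib, Finset.sum_const, ← Finset.mul_sum,
      hw_sum, hm, nsmul_eq_mul]
    have hΔ0 : (Δ:ℝ) ≠ 0 := by
      have : (2:ℝ) ≤ (Δ:ℝ) := by exact_mod_cast hΔ2
      linarith
    field_simp
    ring
  have hmain : 8*(m:ℝ) - c*(2*(n:ℝ) - m - 2*m/(Δ:ℝ)) ≤ AZI G := by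
    rw [AZI, ← hsum]
    exact Finset.sum_le_sum hstep
  have hfinal : ((Δ : ℝ) / ((Δ : ℝ) - 1)) ^ 3 * (2 * n - m - 2 * m / Δ)
      + 8 * (2 * m - 2 * n + 2 * m / Δ) = 8*(m:ℝ) - c*(2*(n:ℝ) - m - 2*m/(Δ:ℝ)) := by
    rw [hc]; ring
  rw [ge_iff_le, hfinal]
  exact hmain
end

section
/- Let G be a connected graph with m ≥ 2 edges and maximum degree Δ ≥ 2. Then AZI(G) ≤ m·Δ⁶/(8(Δ−1)³). -/
open Finset

lemma azi_key (D a b : ℝ) (hD : 2 ≤ D) (ha1 : 1 ≤ a) (haD : a ≤ D)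
    (hb : 2 ≤ b) (hbD : b ≤ D) :
    a * b / (a + b - 2) ≤ D ^ 2 / (2 * (D - 1)) := by
  have h1 : (0:ℝ) < a + b - 2 := by linarith
  have h2 : (0:ℝ) < 2 * (D - 1) := by linarith
  rw [div_le_div_iff₀ h1 h2]
  nlinarith [mul_nonneg (sub_nonneg.2 haD) (sub_nonneg.2 hb),
    mul_nonneg (sub_nonneg.2 hbD) (sub_nonneg.2 ha1),
    mul_nonneg (sub_nonneg.2 ha1) (sub_nonneg.2 hb), sq_nonneg (D - 2)]

lemma azi_edge (D a b : ℝ) (hD : 2 ≤ D) (ha1 : 1 ≤ a) (haD : a ≤ D)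
    (hb1 : 1 ≤ b) (hbD : b ≤ D) (hab : 2 ≤ a ∨ 2 ≤ b) :
    (a * b / (a + b - 2)) ^ 3 ≤ (D ^ 2 / (2 * (D - 1))) ^ 3 := by
  have ha0 : (0:ℝ) ≤ a := by linarith
  have hb0 : (0:ℝ) ≤ b := by linarith
  have hnn : (0:ℝ) ≤ a * b / (a + b - 2) := by
    apply div_nonneg (mul_nonneg ha0 hb0); linarith
  apply pow_le_pow_left₀ hnn
  rcases hab with h | h
  · rw [mul_comm, add_comm]
    exact azi_key D b a hD hb1 hbD h haD
  · exact azi_key D a b hD ha1 haD h hbD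

theorem AZI_upper_bound {V : Type*} [Fintype V]
    (G : SimpleGraph V) [DecidableRel G.Adj] (m Δ : ℕ)
    (hm : G.edgeFinset.card = m) (hm2 : 2 ≤ m)
    (hΔ : G.maxDegree = Δ) (hΔ2 : 2 ≤ Δ)
    (hconn : G.Connected) :
    AZI G ≤ (m : ℝ) * Δ ^ 6 / (8 * ((Δ : ℝ) - 1) ^ 3) := by
  have hD : (2:ℝ) ≤ (Δ:ℝ) := by exact_mod_cast hΔ2
  have hedge : ∀ e ∈ G.edgeFinset,
      Sym2.lift ⟨fun u v => ((G.degree u * G.degree v : ℝ) / (G.degree u + G.degree v - 2)) ^ 3,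
        fun u v => by simp only []; rw [mul_comm (G.degree u : ℝ), add_comm (G.degree u : ℝ)]⟩ e
        ≤ ((Δ:ℝ) ^ 2 / (2 * ((Δ:ℝ) - 1))) ^ 3 := by
    intro e he
    induction e using Sym2.inductionOn with
    | hf u v =>
      rw [SimpleGraph.mem_edgeFinset] at he
      have hadj : G.Adj u v := (SimpleGraph.mem_edgeSet G).1 he
      have hu1 : 1 ≤ G.degree u := G.degree_pos_iff_exists_adj u |>.2 ⟨v, hadj⟩
      have hv1 : 1 ≤ G.degree v := G.degree_pos_iff_exists_adj v |>.2 ⟨u, hadj.symm⟩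
      have huD : G.degree u ≤ Δ := hΔ ▸ G.degree_le_maxDegree u
      have hvD : G.degree v ≤ Δ := hΔ ▸ G.degree_le_maxDegree v
      simp only [Sym2.lift_mk]
      rcases le_or_gt 3 (G.degree u + G.degree v) with hab | hab
      · have hor : 2 ≤ G.degree u ∨ 2 ≤ G.degree v := by omega
        exact azi_edge (Δ:ℝ) _ _ hD (by exact_mod_cast hu1) (by exact_mod_cast huD)
          (by exact_mod_cast hv1) (by exact_mod_cast hvD)
          (by rcases hor with h | h
              · exact Or.inl (by exact_mod_cast h)
              · exact Or.inr (by exact_mod_cast h))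
      · have h1 : G.degree u = 1 := by omega
        have h2 : G.degree v = 1 := by omega
        rw [h1, h2]
        norm_num
        have hpos : (0:ℝ) < (Δ:ℝ) - 1 := by linarith
        positivity
  have hC : AZI G ≤ (m : ℝ) * (((Δ:ℝ) ^ 2 / (2 * ((Δ:ℝ) - 1))) ^ 3) := by
    rw [AZI, ← hm]
    have := Finset.sum_le_card_nsmul G.edgeFinset _ _ hedge
    rwa [nsmul_eq_mul] at this
  refine hC.trans (le_of_eq ?_)
  have h1 : ((Δ:ℝ) - 1) ≠ 0 := by linarith
  field_simp
  ring
end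

section
/- For every edge uv of a graph with both endpoint degrees at most Δ and d_u + d_v ≥ 3, the edge weight (d_u d_v/(d_u + d_v − 2))³ is at most Δ⁶/(8(Δ−1)³), provided Δ ≥ 2. -/
theorem edge_weight_pointwise_bound (du dv Δ : ℕ)
    (hdu : 1 ≤ du) (hdv : 1 ≤ dv) (hduΔ : du ≤ Δ) (hdvΔ : dv ≤ Δ)
    (hsum : 3 ≤ du + dv) (hΔ : 2 ≤ Δ) :
    ((du * dv : ℝ) / ((du : ℝ) + dv - 2)) ^ 3 ≤ (Δ : ℝ) ^ 6 / (8 * ((Δ : ℝ) - 1) ^ 3) := by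
  have ha : (1 : ℝ) ≤ du := by exact_mod_cast hdu
  have hb : (1 : ℝ) ≤ dv := by exact_mod_cast hdv
  have haD : (du : ℝ) ≤ Δ := by exact_mod_cast hduΔ
  have hbD : (dv : ℝ) ≤ Δ := by exact_mod_cast hdvΔ
  have hs : (3 : ℝ) ≤ (du : ℝ) + dv := by exact_mod_cast hsum
  have hD : (2 : ℝ) ≤ Δ := by exact_mod_cast hΔ
  have hden : (0 : ℝ) < (du : ℝ) + dv - 2 := by linarith
  have hden2 : (0 : ℝ) < 2 * ((Δ : ℝ) - 1) := by linarith
  have hbase : (du * dv : ℝ) / ((du : ℝ) + dv - 2) ≤ (Δ : ℝ) ^ 2 / (2 * ((Δ : ℝ) - 1)) := by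
    rw [div_le_div_iff₀ hden hden2]
    have hq : (0:ℝ) ≤ (Δ:ℝ)^2 - 2*Δ + 2 := by nlinarith [sq_nonneg ((Δ:ℝ) - 1)]
    rcases le_or_gt 2 dv with h2n | h2n
    · have h2 : (2:ℝ) ≤ dv := by exact_mod_cast h2n
      have h1 : (0:ℝ) ≤ ((Δ:ℝ) - du) * (((dv:ℝ) - 2) * ((Δ:ℝ)^2 - 2*Δ + 2) + ((Δ:ℝ) - 2)^2) := by
        apply mul_nonneg (by linarith)
        have := mul_nonneg (by linarith : (0:ℝ) ≤ (dv:ℝ) - 2) hq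
        nlinarith
      have h3 : (0:ℝ) ≤ ((du:ℝ) - 1) * Δ * ((Δ:ℝ) - 2) * ((Δ:ℝ) - dv) := by
        apply mul_nonneg (by nlinarith) (by linarith)
      nlinarith [h1, h3]
    · have h2'n : 2 ≤ du := by omega
      have h2' : (2:ℝ) ≤ du := by exact_mod_cast h2'n
      have h1 : (0:ℝ) ≤ ((Δ:ℝ) - dv) * (((du:ℝ) - 2) * ((Δ:ℝ)^2 - 2*Δ + 2) + ((Δ:ℝ) - 2)^2) := by
        apply mul_nonneg (by linarith)
        have := mul_nonneg (by linarith : (0:ℝ) ≤ (du:ℝ) - 2) hq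
        nlinarith
      have h3 : (0:ℝ) ≤ ((dv:ℝ) - 1) * Δ * ((Δ:ℝ) - 2) * ((Δ:ℝ) - du) := by
        apply mul_nonneg (by nlinarith) (by linarith)
      nlinarith [h1, h3]
  have h0 : (0 : ℝ) ≤ (du * dv : ℝ) / ((du : ℝ) + dv - 2) := by
    apply div_nonneg <;> positivity
  calc ((du * dv : ℝ) / ((du : ℝ) + dv - 2)) ^ 3
      ≤ ((Δ : ℝ) ^ 2 / (2 * ((Δ : ℝ) - 1))) ^ 3 := pow_le_pow_left₀ h0 hbase 3
    _ = (Δ : ℝ) ^ 6 / (8 * ((Δ : ℝ) - 1) ^ 3) := by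
        rw [div_pow]; ring_nf
end
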